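/- arXiv:2308.07268 — 2 statements merged into one kernel-verified Lean document; each statement's English description precedes it below -/
import Mathlib

section
/- Let C = {c₁ < c₂ < ... < c_m} be candidate points on the real line and I a finite family of closed intervals each containing more than f points of C. For indices i ≤ j let C_{i,j} = {c_i,...,c_j}, let I_{i,j} be the intervals of I all of whose candidate points lie in C_{i,j}, and let δ_{i,j}(f) be the maximum over failing sets J ⊆ C_{i,j} with |J| ≤ f of the maximum size of a (C_{i,j}\J)-disjoint subfamily of I_{i,j}. Then a subset T ⊆ C is an f-tolerant hitting set of I (i.e., for every J ⊆ C with |J| ≤ f there exists R ⊆ C\J with |(T\J) ∪ R| ≤ |T| such that (T\J) ∪ R hits I) if and only if |T ∩ C_{i,j}| ≥ δ_{i,j}(f) for all 1 ≤ i ≤ j ≤ m. -/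
open Classical

/-- Points hit a family of intervals if every interval contains one of them. -/
def Hits (S : Finset ℝ) (I : Finset (ℝ × ℝ)) : Prop :=
  ∀ s ∈ I, ∃ x ∈ S, x ∈ Set.Icc s.1 s.2

/-- A subfamily is `X`-disjoint: each point of `X` lies in at most one of its intervals. -/
def XDisjoint (X : Finset ℝ) (J' : Finset (ℝ × ℝ)) : Prop :=
  ∀ x ∈ X, ∀ s ∈ J', ∀ s' ∈ J',
    x ∈ Set.Icc s.1 s.2 → x ∈ Set.Icc s'.1 s'.2 → s = s'

/-- The candidates `c_i, ..., c_j`. -/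
noncomputable def Cij {m : ℕ} (c : Fin m → ℝ) (i j : Fin m) : Finset ℝ :=
  (Finset.univ.filter fun t => i ≤ t ∧ t ≤ j).image c

/-- The intervals of `I` all of whose candidate points lie in `C_{i,j}`. -/
noncomputable def Iij {m : ℕ} (c : Fin m → ℝ) (I : Finset (ℝ × ℝ)) (i j : Fin m) :
    Finset (ℝ × ℝ) :=
  I.filter fun s => ∀ t : Fin m, c t ∈ Set.Icc s.1 s.2 → i ≤ t ∧ t ≤ j

/-- `δ_{i,j}(f)`: the maximum, over failing sets `J ⊆ C_{i,j}` with `|J| ≤ f`, of the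
maximum size of a `(C_{i,j} \ J)`-disjoint subfamily of `I_{i,j}`. -/
noncomputable def delta {m : ℕ} (c : Fin m → ℝ) (I : Finset (ℝ × ℝ)) (i j : Fin m)
    (f : ℕ) : ℕ :=
  ((Cij c i j).powerset.filter fun J => J.card ≤ f).sup fun J =>
    ((Iij c I i j).powerset.filter fun J' => XDisjoint (Cij c i j \ J) J').sup Finset.card

/-- `T` is an `f`-tolerant hitting set of `I` over candidate set `C`. -/
def FTolerant (C T : Finset ℝ) (I : Finset (ℝ × ℝ)) (f : ℕ) : Prop :=
  ∀ J ⊆ C, J.card ≤ f → ∃ R ⊆ C \ J, ((T \ J) ∪ R).card ≤ T.card ∧ Hits ((T \ J) ∪ R) I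

/-!
Necessity: fix a window `C_{i,j}`, failures `J ⊆ C_{i,j}` and a `(C_{i,j} \ J)`-disjoint family
`D ⊆ I_{i,j}`. The repaired set hits every interval of `D` inside `C_{i,j} \ J`, with distinct
points by disjointness, and at most `|T ∩ J|` of these points are replacements; so
`|D| ≤ |T ∩ C_{i,j}|`.

Sufficiency: after failures `J`, complete the survivors `T \ J` greedily. The intervals the greedy
step serves are `(C \ J)`-disjoint and miss every survivor, and it adds at most one point per such
interval. Group them by the gap between consecutive survivors that contains them. Each group lies
in a window with no survivors, whose demand is therefore met by failed points of `T` alone, and the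
windows of different groups are disjoint; hence the greedy step adds at most `|T ∩ J|` points.
-/

open Finset

theorem card_inter_sdiff_le_card_inter {α : Type*} [DecidableEq α] {C H J T : Finset α}
    (hJC : J ⊆ C) (hTH : T \ J ⊆ H) (hH : H.card ≤ T.card) :
    (H ∩ (C \ J)).card ≤ (T ∩ C).card := by
  have hsub : H ∩ (C \ J) ⊆ ((T ∩ C) \ J) ∪ (H \ (T \ J)) := by
    intro x hx
    simp only [mem_union, mem_sdiff, mem_inter] at hx ⊢
    tauto
  have hTJ : T ∩ J = (T ∩ C) ∩ J := by
    rw [inter_assoc, inter_eq_right.2 hJC]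
  calc (H ∩ (C \ J)).card ≤ ((T ∩ C) \ J ∪ H \ (T \ J)).card := card_le_card hsub
    _ ≤ ((T ∩ C) \ J).card + (H \ (T \ J)).card := card_union_le _ _
    _ ≤ ((T ∩ C) \ J).card + ((T ∩ C) ∩ J).card := by
        have := card_sdiff_add_card_inter T J
        rw [card_sdiff_of_subset hTH, ← hTJ]
        omega
    _ = (T ∩ C).card := card_sdiff_add_card_inter _ _

section CountBelow

variable {α : Type*} [LinearOrder α]

def countBelow (S : Finset α) (a : α) : ℕ :=
  (S.filter (· < a)).card

theorem countBelow_lt_countBelow_iff {S : Finset α} {a b : α} :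
    countBelow S a < countBelow S b ↔ ∃ y ∈ S, a ≤ y ∧ y < b := by
  constructor
  · intro h
    by_contra! hno
    refine h.not_ge (card_le_card fun y hy => ?_)
    simp only [mem_filter] at hy ⊢
    exact ⟨hy.1, lt_of_not_ge fun hay => (hno y hy.1 hay).not_gt hy.2⟩
  · rintro ⟨y, hyS, hay, hyb⟩
    refine card_lt_card ((ssubset_iff_of_subset fun x hx => ?_).2 ⟨y, ?_, ?_⟩)
    · simp only [mem_filter] at hx ⊢
      exact ⟨hx.1, hx.2.trans (hay.trans_lt hyb)⟩
    · exact mem_filter.2 ⟨hyS, hyb⟩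
    · simpa [mem_filter] using fun _ => hay

theorem notMem_Icc_of_countBelow_eq {S : Finset α} {s s' : α × α}
    (hs' : ∀ y ∈ S, y ∉ Set.Icc s'.1 s'.2) (hlevel : countBelow S s.1 = countBelow S s'.1)
    {a b y : α} (ha : a ∈ Set.Icc s.1 s.2) (hb : b ∈ Set.Icc s'.1 s'.2) (hy : y ∈ S) :
    y ∉ Set.Icc a b := by
  rintro ⟨hay, hyb⟩
  refine hs' y hy ⟨le_of_not_gt fun hys' => ?_, hyb.trans hb.2⟩
  exact hlevel.not_lt (countBelow_lt_countBelow_iff.2 ⟨y, hy, ha.1.trans hay, hys'⟩)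

theorem lt_of_countBelow_lt {S : Finset α} {s s' : α × α}
    (hs : ∀ y ∈ S, y ∉ Set.Icc s.1 s.2) (hlt : countBelow S s.1 < countBelow S s'.1) :
    s.2 < s'.1 := by
  obtain ⟨y, hyS, hsy, hys'⟩ := countBelow_lt_countBelow_iff.1 hlt
  exact (lt_of_not_ge fun hys => hs y hyS ⟨hsy, hys⟩).trans hys'

end CountBelow

theorem XDisjoint.mono_points {X X' : Finset ℝ} {D : Finset (ℝ × ℝ)} (hD : XDisjoint X D)
    (hX : X' ⊆ X) : XDisjoint X' D :=
  fun x hx => hD x (hX hx)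

theorem XDisjoint.subset {X : Finset ℝ} {D D' : Finset (ℝ × ℝ)} (hD : XDisjoint X D)
    (hD' : D' ⊆ D) : XDisjoint X D' :=
  fun x hx a ha b hb => hD x hx a (hD' ha) b (hD' hb)

theorem XDisjoint.insert {X : Finset ℝ} {D : Finset (ℝ × ℝ)} {s : ℝ × ℝ} (hD : XDisjoint X D)
    (hs : ∀ d ∈ D, ∀ x ∈ X, x ∈ Set.Icc s.1 s.2 → x ∉ Set.Icc d.1 d.2) :
    XDisjoint X (insert s D) := by
  intro x hx a ha b hb hxa hxb
  rcases mem_insert.1 ha with rfl | haD <;> rcases mem_insert.1 hb with rfl | hbD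
  · rfl
  · exact (hs b hbD x hx hxa hxb).elim
  · exact (hs a haD x hx hxb hxa).elim
  · exact hD x hx a haD b hbD hxa hxb

theorem card_le_card_of_hits_of_xDisjoint {X S : Finset ℝ} {D : Finset (ℝ × ℝ)} (hSX : S ⊆ X)
    (hD : XDisjoint X D) (hS : Hits S D) : D.card ≤ S.card :=
  card_le_card_of_forall_subsingleton (fun (s : ℝ × ℝ) (x : ℝ) => x ∈ Set.Icc s.1 s.2) hS
    fun x hx _ ha _ hb => hD x (hSX hx) _ ha.1 _ hb.1 ha.2 hb.2

noncomputable def unhit (S : Finset ℝ) (I : Finset (ℝ × ℝ)) : Finset (ℝ × ℝ) :=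
  I.filter fun s => ∀ x ∈ S, x ∉ Set.Icc s.1 s.2

theorem hits_iff_unhit_eq_empty {S : Finset ℝ} {I : Finset (ℝ × ℝ)} :
    Hits S I ↔ unhit S I = ∅ := by
  simp [Hits, unhit, filter_eq_empty_iff]

theorem unhit_anti {S S' : Finset ℝ} (h : S ⊆ S') (I : Finset (ℝ × ℝ)) :
    unhit S' I ⊆ unhit S I :=
  fun _ hd => mem_filter.2 ⟨(mem_filter.1 hd).1, fun x hx => (mem_filter.1 hd).2 x (h hx)⟩

theorem unhit_insert_subset {S : Finset ℝ} {I : Finset (ℝ × ℝ)} {s : ℝ × ℝ} {p : ℝ}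
    (hp : p ∈ Set.Icc s.1 s.2) : unhit (insert p S) I ⊆ (unhit S I).erase s := by
  intro d hd
  refine mem_erase.2 ⟨?_, unhit_anti (subset_insert p S) I hd⟩
  rintro rfl
  exact (mem_filter.1 hd).2 p (mem_insert_self p S) hp

/-- Greedy: take the unhit interval with the leftmost right end and add the rightmost point of `X`
in it; no later interval served by the greedy can share a point of `X` with it. -/
theorem exists_greedy_completion {X : Finset ℝ} {I : Finset (ℝ × ℝ)} (hX : Hits X I)
    (S : Finset ℝ) : ∃ R ⊆ X, ∃ D ⊆ unhit S I, R.card ≤ D.card ∧ XDisjoint X D ∧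
      Hits (S ∪ R) I := by
  induction hn : (unhit S I).card using Nat.strong_induction_on generalizing S with
  | _ n ih =>
  rcases (unhit S I).eq_empty_or_nonempty with hU | hU
  · refine ⟨∅, empty_subset _, ∅, empty_subset _, le_rfl, by simp [XDisjoint], ?_⟩
    rwa [union_empty, hits_iff_unhit_eq_empty]
  obtain ⟨s₀, hs₀, hmin⟩ := exists_min_image _ Prod.snd hU
  obtain ⟨p, hp, hpmax⟩ := exists_max_image (X.filter (· ∈ Set.Icc s₀.1 s₀.2)) id
    (by simpa [Finset.Nonempty] using hX s₀ (mem_filter.1 hs₀).1)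
  obtain ⟨hpX, hps₀⟩ := mem_filter.1 hp
  have hlt : (unhit (insert p S) I).card < n :=
    hn ▸ (card_le_card (unhit_insert_subset hps₀)).trans_lt (card_erase_lt_of_mem hs₀)
  obtain ⟨R, hRX, D, hD, hRD, hdisj, hhits⟩ := ih _ hlt (insert p S) rfl
  have hs₀D : s₀ ∉ D := fun h => (mem_filter.1 (hD h)).2 p (mem_insert_self p S) hps₀
  refine ⟨insert p R, insert_subset hpX hRX, insert s₀ D,
    insert_subset hs₀ (hD.trans (unhit_anti (subset_insert p S) I)), ?_, ?_, ?_⟩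
  · rw [card_insert_of_notMem hs₀D]
    exact (card_insert_le p R).trans (by omega)
  · refine hdisj.insert fun d hd x hxX hxs₀ hxd => ?_
    have hd₂ : s₀.2 ≤ d.2 := hmin d (unhit_anti (subset_insert p S) I (hD hd))
    have hxp : x ≤ p := hpmax x (mem_filter.2 ⟨hxX, hxs₀⟩)
    exact (mem_filter.1 (hD hd)).2 p (mem_insert_self p S)
      ⟨hxd.1.trans hxp, hps₀.2.trans hd₂⟩
  · rwa [union_insert, ← insert_union]

section Windows

variable {m : ℕ} {c : Fin m → ℝ}

theorem mem_Cij {i j : Fin m} {x : ℝ} : x ∈ Cij c i j ↔ ∃ t, (i ≤ t ∧ t ≤ j) ∧ c t = x := by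
  simp [Cij]

theorem Cij_subset (c : Fin m → ℝ) (i j : Fin m) : Cij c i j ⊆ univ.image c :=
  image_subset_image (filter_subset _ _)

theorem disjoint_Cij_of_lt (hc : Function.Injective c) {i j i' j' : Fin m} (h : j < i') :
    Disjoint (Cij c i j) (Cij c i' j') := by
  rw [Cij, Cij, disjoint_image hc, disjoint_filter]
  intro t _ ht ht'
  exact absurd (ht.2.trans_lt (h.trans_le ht'.1)) (lt_irrefl t)

theorem mem_Cij_of_mem_Iij {I : Finset (ℝ × ℝ)} {i j : Fin m} {s : ℝ × ℝ}
    (hs : s ∈ Iij c I i j) {x : ℝ} (hxC : x ∈ univ.image c) (hxs : x ∈ Set.Icc s.1 s.2) :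
    x ∈ Cij c i j := by
  obtain ⟨t, -, rfl⟩ := mem_image.1 hxC
  exact mem_Cij.2 ⟨t, (mem_filter.1 hs).2 t hxs, rfl⟩

theorem sum_card_inter_Cij_le {ι : Type*} [LinearOrder ι] (hc : Function.Injective c)
    {V : Finset ι} {i j : ι → Fin m} (hord : ∀ v ∈ V, ∀ v' ∈ V, v < v' → j v < i v')
    (A : Finset ℝ) : ∑ v ∈ V, (A ∩ Cij c (i v) (j v)).card ≤ A.card := by
  rw [← card_biUnion]
  · exact card_le_card (biUnion_subset.2 fun _ _ => inter_subset_left)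
  intro v hv v' hv' hne
  refine Disjoint.mono inter_subset_right inter_subset_right ?_
  rcases lt_or_gt_of_ne hne with h | h
  · exact disjoint_Cij_of_lt hc (hord v hv v' hv' h)
  · exact (disjoint_Cij_of_lt hc (hord v' hv' v hv h)).symm

theorem exists_tight_window {I F : Finset (ℝ × ℝ)} (hFI : F ⊆ I)
    (hF : ∃ s ∈ F, ∃ t, c t ∈ Set.Icc s.1 s.2) :
    ∃ i j, i ≤ j ∧ F ⊆ Iij c I i j ∧ (∃ s ∈ F, c i ∈ Set.Icc s.1 s.2) ∧
      ∃ s ∈ F, c j ∈ Set.Icc s.1 s.2 := by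
  set K := univ.filter fun t => ∃ s ∈ F, c t ∈ Set.Icc s.1 s.2
  have hmem : ∀ {t}, t ∈ K ↔ ∃ s ∈ F, c t ∈ Set.Icc s.1 s.2 := by simp [K]
  obtain ⟨s₀, hs₀, t₀, ht₀⟩ := hF
  have hK : K.Nonempty := ⟨t₀, hmem.2 ⟨s₀, hs₀, ht₀⟩⟩
  refine ⟨K.min' hK, K.max' hK, min'_le_max' K hK, fun s hs => ?_,
    hmem.1 (K.min'_mem hK), hmem.1 (K.max'_mem hK)⟩
  exact mem_filter.2 ⟨hFI hs, fun t ht =>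
    ⟨K.min'_le t (hmem.2 ⟨s, hs, ht⟩), K.le_max' t (hmem.2 ⟨s, hs, ht⟩)⟩⟩

variable {I : Finset (ℝ × ℝ)} {f : ℕ}

theorem delta_le_iff {i j : Fin m} {n : ℕ} :
    delta c I i j f ≤ n ↔ ∀ J ⊆ Cij c i j, J.card ≤ f →
      ∀ D ⊆ Iij c I i j, XDisjoint (Cij c i j \ J) D → D.card ≤ n := by
  simp only [delta, Finset.sup_le_iff, mem_filter, mem_powerset, and_imp]

theorem card_le_delta {i j : Fin m} {J : Finset ℝ} {D : Finset (ℝ × ℝ)} (hJ : J.card ≤ f)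
    (hD : D ⊆ Iij c I i j) (hdisj : XDisjoint (univ.image c \ J) D) :
    D.card ≤ delta c I i j f := by
  refine delta_le_iff.1 le_rfl (J ∩ Cij c i j) inter_subset_right
    ((card_le_card inter_subset_left).trans hJ) D hD (hdisj.mono_points fun x hx => ?_)
  obtain ⟨hxC, hxJ⟩ := mem_sdiff.1 hx
  exact mem_sdiff.2 ⟨Cij_subset c i j hxC, fun h => hxJ (mem_inter.2 ⟨h, hxC⟩)⟩

/-- Intervals with the same `countBelow (T \ J)` of their left ends lie in one gap of `T \ J`. -/
theorem card_le_card_inter_of_window_demands (hc : StrictMono c) {T J : Finset ℝ}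
    (hw : ∀ i j, i ≤ j → delta c I i j f ≤ (T ∩ Cij c i j).card) (hJ : J.card ≤ f)
    {D : Finset (ℝ × ℝ)} (hD : D ⊆ unhit (T \ J) I) (hdisj : XDisjoint (univ.image c \ J) D)
    (hcand : ∀ s ∈ D, ∃ t, c t ∈ Set.Icc s.1 s.2) : D.card ≤ (T ∩ J).card := by
  rcases D.eq_empty_or_nonempty with rfl | ⟨s₀, hs₀⟩
  · simp
  have : Nonempty (Fin m) := ⟨(hcand s₀ hs₀).choose⟩
  have havoid : ∀ s ∈ D, ∀ y ∈ T \ J, y ∉ Set.Icc s.1 s.2 := fun s hs => (mem_filter.1 (hD hs)).2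
  set level := fun s : ℝ × ℝ => countBelow (T \ J) s.1
  set V := D.image level
  set group := fun v => D.filter (level · = v)
  have hgroup : ∀ {v s}, s ∈ group v ↔ s ∈ D ∧ level s = v := mem_filter
  have hwindow : ∀ v ∈ V, ∃ i j, i ≤ j ∧ group v ⊆ Iij c I i j ∧
      (∃ s ∈ group v, c i ∈ Set.Icc s.1 s.2) ∧ ∃ s ∈ group v, c j ∈ Set.Icc s.1 s.2 := by
    intro v hv
    obtain ⟨s, hs, rfl⟩ := mem_image.1 hv
    exact exists_tight_window ((filter_subset _ _).trans (hD.trans (filter_subset _ _)))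
      ⟨s, hgroup.2 ⟨hs, rfl⟩, hcand s hs⟩
  choose! i j hij hIij hleft hright using hwindow
  have hgroup_card : ∀ v ∈ V, (group v).card ≤ ((T ∩ J) ∩ Cij c (i v) (j v)).card := by
    intro v hv
    obtain ⟨s, hs, hsi⟩ := hleft v hv
    obtain ⟨s', hs', hs'j⟩ := hright v hv
    have hTJ : T ∩ Cij c (i v) (j v) ⊆ (T ∩ J) ∩ Cij c (i v) (j v) := by
      intro x hx
      obtain ⟨hxT, hxC⟩ := mem_inter.1 hx
      refine mem_inter.2 ⟨mem_inter.2 ⟨hxT, by_contra fun hxJ => ?_⟩, hxC⟩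
      obtain ⟨t, ⟨hit, htj⟩, rfl⟩ := mem_Cij.1 hxC
      exact notMem_Icc_of_countBelow_eq (havoid s' (hgroup.1 hs').1)
        ((hgroup.1 hs).2.trans (hgroup.1 hs').2.symm) hsi hs'j (mem_sdiff.2 ⟨hxT, hxJ⟩)
        ⟨hc.monotone hit, hc.monotone htj⟩
    calc (group v).card ≤ delta c I (i v) (j v) f :=
          card_le_delta hJ (hIij v hv) (hdisj.subset (filter_subset _ _))
      _ ≤ (T ∩ Cij c (i v) (j v)).card := hw _ _ (hij v hv)
      _ ≤ ((T ∩ J) ∩ Cij c (i v) (j v)).card := card_le_card hTJ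
  have hord : ∀ v ∈ V, ∀ v' ∈ V, v < v' → j v < i v' := by
    intro v hv v' hv' hlt
    obtain ⟨s, hs, hsj⟩ := hright v hv
    obtain ⟨s', hs', hs'i⟩ := hleft v' hv'
    rw [← (hgroup.1 hs).2, ← (hgroup.1 hs').2] at hlt
    exact hc.lt_iff_lt.1 (hsj.2.trans_lt
      ((lt_of_countBelow_lt (havoid s (hgroup.1 hs).1) hlt).trans_le hs'i.1))
  calc D.card = ∑ v ∈ V, (group v).card := card_eq_sum_card_image level D
    _ ≤ ∑ v ∈ V, ((T ∩ J) ∩ Cij c (i v) (j v)).card := sum_le_sum hgroup_card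
    _ ≤ (T ∩ J).card := sum_card_inter_Cij_le hc.injective hord (T ∩ J)

end Windows

/-- Characterization of `f`-tolerant hitting sets via the window demands `δ_{i,j}(f)`. -/
theorem fTolerant_iff_window_demands {m f : ℕ} (c : Fin m → ℝ) (hc : StrictMono c)
    (I : Finset (ℝ × ℝ))
    (hbig : ∀ s ∈ I, f < ((Finset.univ.image c).filter fun x => x ∈ Set.Icc s.1 s.2).card)
    (T : Finset ℝ) (hT : T ⊆ Finset.univ.image c) :
    FTolerant (Finset.univ.image c) T I f ↔
      ∀ i j : Fin m, i ≤ j → delta c I i j f ≤ (T ∩ Cij c i j).card := by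
  constructor
  · intro hFT i j _
    refine delta_le_iff.2 fun J hJ hJf D hD hdisj => ?_
    obtain ⟨R, hR, hcard, hhits⟩ := hFT J (hJ.trans (Cij_subset c i j)) hJf
    set H := (T \ J) ∪ R
    have hHC : H ⊆ univ.image c \ J :=
      union_subset (sdiff_subset_sdiff hT le_rfl) hR
    have hDhit : Hits (H ∩ (Cij c i j \ J)) D := fun s hs => by
      obtain ⟨x, hxH, hxs⟩ := hhits s (mem_filter.1 (hD hs)).1
      obtain ⟨hxC, hxJ⟩ := mem_sdiff.1 (hHC hxH)
      exact ⟨x, mem_inter.2 ⟨hxH, mem_sdiff.2 ⟨mem_Cij_of_mem_Iij (hD hs) hxC hxs, hxJ⟩⟩, hxs⟩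
    calc D.card ≤ (H ∩ (Cij c i j \ J)).card :=
          card_le_card_of_hits_of_xDisjoint inter_subset_right hdisj hDhit
      _ ≤ (T ∩ Cij c i j).card := card_inter_sdiff_le_card_inter hJ subset_union_left hcard
  · intro hw J _ hJf
    have hsurvive : Hits (univ.image c \ J) I := fun s hs => by
      obtain ⟨x, hx, hxJ⟩ := exists_mem_notMem_of_card_lt_card (hJf.trans_lt (hbig s hs))
      exact ⟨x, mem_sdiff.2 ⟨(mem_filter.1 hx).1, hxJ⟩, (mem_filter.1 hx).2⟩
    obtain ⟨R, hRX, D, hD, hRD, hdisj, hhits⟩ := exists_greedy_completion hsurvive (T \ J)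
    have hcand : ∀ s ∈ D, ∃ t, c t ∈ Set.Icc s.1 s.2 := fun s hs => by
      obtain ⟨x, hx⟩ := card_pos.1 ((Nat.zero_le f).trans_lt (hbig s (mem_filter.1 (hD hs)).1))
      obtain ⟨t, -, rfl⟩ := mem_image.1 (mem_filter.1 hx).1
      exact ⟨t, (mem_filter.1 hx).2⟩
    refine ⟨R, hRX, ?_, hhits⟩
    calc ((T \ J) ∪ R).card ≤ (T \ J).card + R.card := card_union_le _ _
      _ ≤ (T \ J).card + (T ∩ J).card := by
          have := card_le_card_inter_of_window_demands hc hw hJf hD hdisj hcand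
          omega
      _ = T.card := card_sdiff_add_card_inter T J
end

section
/- Let T ⊆ C be an f-tolerant hitting set of a family of intervals I on the real line with candidate set C = {c₁ < ... < c_m}. Then for all indices i ≤ j and every failing set J ⊆ C_{i,j} with |J| ≤ f, the size |T ∩ C_{i,j}| is at least the maximum size of a (C_{i,j}\J)-disjoint subfamily of I_{i,j}. -/
open Classical

/-- If `T` is an `f`-tolerant hitting set, then for all windows `i ≤ j` and failing sets
`J ⊆ C_{i,j}` with `|J| ≤ f`, `|T ∩ C_{i,j}|` is at least the size of any
`(C_{i,j} \ J)`-disjoint subfamily of `I_{i,j}` (hence at least the maximum such size). -/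
theorem fTolerant_window_lower_bound {m f : ℕ} (c : Fin m → ℝ) (hc : StrictMono c)
    (I : Finset (ℝ × ℝ)) (T : Finset ℝ) (hT : T ⊆ Finset.univ.image c)
    (hft : FTolerant (Finset.univ.image c) T I f) :
    ∀ i j : Fin m, i ≤ j → ∀ J ⊆ Cij c i j, J.card ≤ f →
      ∀ J' ⊆ Iij c I i j, XDisjoint (Cij c i j \ J) J' →
        J'.card ≤ (T ∩ Cij c i j).card := by
  intro i j hij J hJ hJf J' hJ' hdisj
  have hCijsub : Cij c i j ⊆ Finset.univ.image c := by
    intro x hx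
    simp only [Cij, Finset.mem_image, Finset.mem_filter] at hx ⊢
    obtain ⟨t, _, ht⟩ := hx
    exact ⟨t, Finset.mem_univ t, ht⟩
  obtain ⟨R, hR, hcard, hhits⟩ := hft J (hJ.trans hCijsub) hJf
  set S := (T \ J) ∪ R with hS
  have hSJ : ∀ x ∈ S, x ∉ J := by
    intro x hx
    rcases Finset.mem_union.mp hx with h | h
    · exact (Finset.mem_sdiff.mp h).2
    · exact (Finset.mem_sdiff.mp (hR h)).2
  have hSC : ∀ x ∈ S, ∃ t : Fin m, c t = x := by
    intro x hx
    rcases Finset.mem_union.mp hx with h | h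
    · obtain ⟨t, _, ht⟩ := Finset.mem_image.mp (hT (Finset.mem_sdiff.mp h).1)
      exact ⟨t, ht⟩
    · obtain ⟨t, _, ht⟩ := Finset.mem_image.mp (Finset.mem_sdiff.mp (hR h)).1
      exact ⟨t, ht⟩
  have key : ∀ s ∈ J', ∃ x ∈ S ∩ (Cij c i j \ J), x ∈ Set.Icc s.1 s.2 := by
    intro s hs
    have hsI : s ∈ Iij c I i j := hJ' hs
    rw [Iij, Finset.mem_filter] at hsI
    obtain ⟨x, hxS, hxIcc⟩ := hhits s hsI.1
    obtain ⟨t, ht⟩ := hSC x hxS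
    have hbounds := hsI.2 t (ht ▸ hxIcc)
    refine ⟨x, Finset.mem_inter.mpr ⟨hxS, Finset.mem_sdiff.mpr ⟨?_, hSJ x hxS⟩⟩, hxIcc⟩
    exact Finset.mem_image.mpr ⟨t, Finset.mem_filter.mpr ⟨Finset.mem_univ t, hbounds⟩, ht⟩
  classical
  set g : ℝ × ℝ → ℝ := fun s =>
    if h : ∃ x ∈ S ∩ (Cij c i j \ J), x ∈ Set.Icc s.1 s.2 then h.choose else 0 with hg
  have hgspec : ∀ s ∈ J', g s ∈ S ∩ (Cij c i j \ J) ∧ g s ∈ Set.Icc s.1 s.2 := by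
    intro s hs
    have h := key s hs
    simp only [hg, dif_pos h]
    obtain ⟨h1, h2⟩ := h.choose_spec
    exact ⟨h1, h2⟩
  have h1 : J'.card ≤ (S ∩ (Cij c i j \ J)).card := by
    apply Finset.card_le_card_of_injOn g (fun s hs => (hgspec s hs).1)
    intro a ha b hb hab
    have hga := hgspec a ha
    have hgb := hgspec b hb
    have hmem : g a ∈ Cij c i j \ J := (Finset.mem_inter.mp hga.1).2
    exact hdisj (g a) hmem a ha b hb hga.2 (hab ▸ hgb.2)
  have h2 : (S ∩ (Cij c i j \ J)).card ≤ (S ∩ Cij c i j).card :=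
    Finset.card_le_card (Finset.inter_subset_inter_left (Finset.sdiff_subset))
  have h3 : (S ∩ Cij c i j).card ≤ (T ∩ Cij c i j).card := by
    have hTS : T \ Cij c i j ⊆ S \ Cij c i j := by
      intro x hx
      obtain ⟨hxT, hxC⟩ := Finset.mem_sdiff.mp hx
      have hxJ : x ∉ J := fun h => hxC (hJ h)
      exact Finset.mem_sdiff.mpr ⟨Finset.mem_union.mpr (Or.inl (Finset.mem_sdiff.mpr ⟨hxT, hxJ⟩)), hxC⟩
    have e1 := Finset.card_inter_add_card_sdiff S (Cij c i j)
    have e2 := Finset.card_inter_add_card_sdiff T (Cij c i j)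
    have e3 := Finset.card_le_card hTS
    omega
  omega
end
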